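/- arXiv:2204.00776 — 2 statements merged into one kernel-verified Lean document; each statement's English description precedes it below -/
import Mathlib

section
/- Let H be a separable Banach space, S a nonempty finite set, and X = H × S. Let (P_{s,t})_{s ≤ t} be a two-parameter family of Markov kernels on X satisfying the Chapman–Kolmogorov relation. Assume: (i) for every x ∈ X and η > 0 there exists R > 0 such that P_{s,t}(x)({(u,j) ∈ X : ‖u‖ ≤ R}) > 1 − η for all s ≤ t; (ii) for every s ∈ ℝ, every bounded set B ⊆ H and every η > 0 there exists T > 0 such that d_L^*(P_{s,t}(x₁), P_{s,t}(x₂)) ≤ η for all t ≥ s + T and all x₁, x₂ ∈ B × S; (iii) there is a family (μ_t)_{t∈ℝ} of Borel probability measures on X such that for every t ∈ ℝ and x ∈ X, d_L^*(P_{s,t}(x), μ_t) → 0 as s → −∞. Then for every s ∈ ℝ and x ∈ X, d_L^*(P_{s,t}(x), μ_t) → 0 as t → +∞ (forward asymptotic stability in distribution). -/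
open MeasureTheory ProbabilityTheory Filter Topology ENNReal

/-- The metric on X = H × S: d_X((u,i),(v,j)) = ‖u − v‖ + (0 if i = j, 1 otherwise). -/
noncomputable def distX {H S : Type*} [NormedAddCommGroup H] [DecidableEq S]
    (x y : H × S) : ℝ :=
  ‖x.1 - y.1‖ + (if x.2 = y.2 then (0 : ℝ) else 1)

/-- The bounded-Lipschitz distance d_L^* between two Borel measures on H × S. -/
noncomputable def dLstar {H S : Type*} [NormedAddCommGroup H] [DecidableEq S]
    [MeasurableSpace H] [MeasurableSpace S]
    (μ ν : Measure (H × S)) : ℝ :=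
  sSup { r : ℝ | ∃ φ : H × S → ℝ,
    (∃ C K : ℝ, 0 ≤ C ∧ 0 ≤ K ∧ C + K ≤ 1 ∧ (∀ x, |φ x| ≤ C) ∧
      ∀ x y, |φ x - φ y| ≤ K * distX x y) ∧
    r = |(∫ x, φ x ∂μ) - ∫ x, φ x ∂ν| }

section Aux

variable {H S : Type*}
    [NormedAddCommGroup H] [NormedSpace ℝ H] [CompleteSpace H]
    [SecondCountableTopology H] [MeasurableSpace H] [BorelSpace H]
    [Fintype S] [DecidableEq S]
    [MeasurableSpace S] [MeasurableSingletonClass S]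

/-- Admissible test functions for `dLstar`. -/
def Adm (φ : H × S → ℝ) : Prop :=
  ∃ C K : ℝ, 0 ≤ C ∧ 0 ≤ K ∧ C + K ≤ 1 ∧ (∀ x, |φ x| ≤ C) ∧
    ∀ x y, |φ x - φ y| ≤ K * distX x y

lemma dLstar_eq (μ ν : Measure (H × S)) :
    dLstar μ ν = sSup { r : ℝ | ∃ φ : H × S → ℝ,
      Adm φ ∧ r = |(∫ x, φ x ∂μ) - ∫ x, φ x ∂ν| } := rfl

lemma Adm.measurable {φ : H × S → ℝ} (h : Adm φ) : Measurable φ := by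
  obtain ⟨C, K, _, hK0, _, _, hLip⟩ := h
  apply measurable_from_prod_countable_left
  intro j
  have hL : LipschitzWith (Real.toNNReal K) fun u : H => φ (u, j) := by
    apply LipschitzWith.of_dist_le_mul
    intro u v
    rw [Real.dist_eq, dist_eq_norm, Real.coe_toNNReal K hK0]
    simpa [distX] using hLip (u, j) (v, j)
  exact hL.continuous.measurable

lemma abs_integral_le_bound {μ : Measure (H × S)} [IsProbabilityMeasure μ]
    {φ : H × S → ℝ} {C : ℝ} (hCb : ∀ x, |φ x| ≤ C) :
    |∫ x, φ x ∂μ| ≤ C := by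
  have h := norm_integral_le_of_norm_le_const (μ := μ) (f := φ) (C := C)
    (Filter.Eventually.of_forall fun x => by simpa [Real.norm_eq_abs] using hCb x)
  simpa [Real.norm_eq_abs] using h

lemma zero_mem_dSet (μ ν : Measure (H × S)) :
    (0 : ℝ) ∈ { r : ℝ | ∃ φ : H × S → ℝ,
      Adm φ ∧ r = |(∫ x, φ x ∂μ) - ∫ x, φ x ∂ν| } := by
  refine ⟨fun _ => 0, ⟨0, 0, le_refl _, le_refl _, by norm_num,
    fun x => by simp, fun x y => by simp⟩, by simp⟩

lemma bddAbove_dSet (μ ν : Measure (H × S)) [IsProbabilityMeasure μ]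
    [IsProbabilityMeasure ν] :
    BddAbove { r : ℝ | ∃ φ : H × S → ℝ,
      Adm φ ∧ r = |(∫ x, φ x ∂μ) - ∫ x, φ x ∂ν| } := by
  refine ⟨2, ?_⟩
  rintro r ⟨φ, ⟨C, K, hC0, hK0, hCK1, hCb, _⟩, rfl⟩
  have hC1 : C ≤ 1 := le_trans (le_add_of_nonneg_right hK0) hCK1
  have h1 : |∫ x, φ x ∂μ| ≤ C := abs_integral_le_bound hCb
  have h2 : |∫ x, φ x ∂ν| ≤ C := abs_integral_le_bound hCb
  calc |(∫ x, φ x ∂μ) - ∫ x, φ x ∂ν| ≤ |∫ x, φ x ∂μ| + |∫ x, φ x ∂ν| := abs_sub _ _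
    _ ≤ 2 := by linarith

lemma abs_sub_integral_le_dLstar {μ ν : Measure (H × S)} [IsProbabilityMeasure μ]
    [IsProbabilityMeasure ν] {φ : H × S → ℝ} (hφ : Adm φ) :
    |(∫ x, φ x ∂μ) - ∫ x, φ x ∂ν| ≤ dLstar μ ν := by
  rw [dLstar_eq]
  exact le_csSup (bddAbove_dSet μ ν) ⟨φ, hφ, rfl⟩

lemma dLstar_nonneg (μ ν : Measure (H × S)) [IsProbabilityMeasure μ]
    [IsProbabilityMeasure ν] : 0 ≤ dLstar μ ν := by
  rw [dLstar_eq]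
  exact le_csSup (bddAbove_dSet μ ν) (zero_mem_dSet μ ν)

lemma dLstar_le_of_forall {μ ν : Measure (H × S)} {M : ℝ}
    (h : ∀ φ : H × S → ℝ, Adm φ → |(∫ x, φ x ∂μ) - ∫ x, φ x ∂ν| ≤ M) :
    dLstar μ ν ≤ M := by
  rw [dLstar_eq]
  refine csSup_le ⟨0, zero_mem_dSet μ ν⟩ ?_
  rintro r ⟨φ, hφ, rfl⟩
  exact h φ hφ

lemma dLstar_triangle (μ κ ν : Measure (H × S)) [IsProbabilityMeasure μ]
    [IsProbabilityMeasure κ] [IsProbabilityMeasure ν] :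
    dLstar μ ν ≤ dLstar μ κ + dLstar κ ν := by
  refine dLstar_le_of_forall fun φ hφ => ?_
  calc |(∫ x, φ x ∂μ) - ∫ x, φ x ∂ν|
      ≤ |(∫ x, φ x ∂μ) - ∫ x, φ x ∂κ| + |(∫ x, φ x ∂κ) - ∫ x, φ x ∂ν| := abs_sub_le _ _ _
    _ ≤ dLstar μ κ + dLstar κ ν :=
        add_le_add (abs_sub_integral_le_dLstar hφ) (abs_sub_integral_le_dLstar hφ)

end Aux

/-- Bochner integral against a composition of Markov kernels, for bounded measurable f. -/
lemma integral_comp_kernel {α β γ : Type*} {mα : MeasurableSpace α} {mβ : MeasurableSpace β}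
    {mγ : MeasurableSpace γ}
    (η : Kernel β γ) [IsMarkovKernel η] (κ : Kernel α β) [IsMarkovKernel κ] (a : α)
    {f : γ → ℝ} (hf : Measurable f) {C : ℝ} (hC : ∀ z, |f z| ≤ C) :
    ∫ z, f z ∂((η ∘ₖ κ) a) = ∫ y, ∫ z, f z ∂(η y) ∂(κ a) := by
  rw [Kernel.comp_eq_snd_compProd, Kernel.snd_apply,
    integral_map measurable_snd.aemeasurable hf.aestronglyMeasurable]
  have hint : Integrable (fun p : β × γ => f p.2) ((κ ⊗ₖ Kernel.prodMkLeft α η) a) := by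
    refine Integrable.mono' (integrable_const C)
      ((hf.comp measurable_snd).aestronglyMeasurable)
      (Filter.Eventually.of_forall fun p => by simpa [Real.norm_eq_abs] using hC p.2)
  rw [ProbabilityTheory.integral_compProd hint]
  simp [Kernel.prodMkLeft_apply]

/-- forward asymptotic stability in distribution:
d_L^*(P_{s,t}(x), μ_t) → 0 as t → +∞. -/
theorem stmt_3
    {H S : Type*}
    [NormedAddCommGroup H] [NormedSpace ℝ H] [CompleteSpace H]
    [SecondCountableTopology H] [MeasurableSpace H] [BorelSpace H]
    [Fintype S] [Nonempty S] [DecidableEq S]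
    [MeasurableSpace S] [MeasurableSingletonClass S]
    (P : ℝ → ℝ → Kernel (H × S) (H × S))
    (hMarkov : ∀ s t : ℝ, s ≤ t → IsMarkovKernel (P s t))
    (hCK : ∀ s r t : ℝ, s ≤ r → r ≤ t → ∀ x : H × S, ∀ A : Set (H × S),
      MeasurableSet A → P s t x A = ∫⁻ y, P r t y A ∂(P s r x))
    (hBound : ∀ x : H × S, ∀ η : ℝ, 0 < η → ∃ R : ℝ, 0 < R ∧
      ∀ s t : ℝ, s ≤ t →
        P s t x {y : H × S | ‖y.1‖ ≤ R} > 1 - ENNReal.ofReal η)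
    (hContr : ∀ s : ℝ, ∀ B : Set H, Bornology.IsBounded B → ∀ η : ℝ, 0 < η →
      ∃ T : ℝ, 0 < T ∧ ∀ t : ℝ, s + T ≤ t → ∀ x₁ x₂ : H × S,
        x₁.1 ∈ B → x₂.1 ∈ B → dLstar (P s t x₁) (P s t x₂) ≤ η)
    (μ : ℝ → Measure (H × S)) (hμ : ∀ t, IsProbabilityMeasure (μ t))
    (hPullback : ∀ t : ℝ, ∀ x : H × S,
      Tendsto (fun s : ℝ => dLstar (P s t x) (μ t)) atBot (nhds 0)) :
    ∀ s : ℝ, ∀ x : H × S,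
      Tendsto (fun t : ℝ => dLstar (P s t x) (μ t)) atTop (nhds 0) := by
  intro s x
  rw [Metric.tendsto_atTop]
  intro ε hε
  set η : ℝ := ε / 4 with hηdef
  have hη : 0 < η := by positivity
  obtain ⟨R, hR, hRball⟩ := hBound x η hη
  set B : Set H := Metric.closedBall (0 : H) (max R ‖x.1‖) with hBdef
  have hBbd : Bornology.IsBounded B := Metric.isBounded_closedBall
  obtain ⟨T, hT, hTc⟩ := hContr s B hBbd η hη
  refine ⟨s + T, fun t ht => ?_⟩
  have hst : s ≤ t := le_trans (le_add_of_nonneg_right hT.le) ht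
  haveI h3 := hMarkov s t hst
  haveI hμt := hμ t
  -- membership of x in B
  have hxB : x.1 ∈ B := by
    simp only [hBdef, Metric.mem_closedBall, dist_zero_right]
    exact le_max_right _ _
  -- the set A of points with bounded first coordinate
  set A : Set (H × S) := {y : H × S | ‖y.1‖ ≤ R} with hAdef
  have hAm : MeasurableSet A := measurableSet_le measurable_fst.norm measurable_const
  -- Key claim: for all r ≤ s, dLstar (P s t x) (P r t x) ≤ η + 2η
  have hclaim : ∀ r : ℝ, r ≤ s → dLstar (P s t x) (P r t x) ≤ η + 2 * η := by
    intro r hrs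
    haveI h1 := hMarkov r s hrs
    haveI h2 := hMarkov r t (hrs.trans hst)
    refine dLstar_le_of_forall fun φ hφAdm => ?_
    obtain ⟨C, K, hC0, hK0, hCK1, hCb, hLip⟩ := hφAdm
    have hφAdm' : Adm φ := ⟨C, K, hC0, hK0, hCK1, hCb, hLip⟩
    have hφm : Measurable φ := hφAdm'.measurable
    have hC1 : C ≤ 1 := le_trans (le_add_of_nonneg_right hK0) hCK1
    -- composed measure identity
    have hmeq : P r t x = ((P s t) ∘ₖ (P r s)) x := by
      refine Measure.ext fun A' hA' => ?_
      rw [hCK r s t hrs hst x A' hA', Kernel.comp_apply' _ _ _ hA']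
    have key : ∫ z, φ z ∂(P r t x) = ∫ y, (∫ z, φ z ∂(P s t y)) ∂(P r s x) := by
      rw [hmeq]
      exact integral_comp_kernel (P s t) (P r s) x hφm hCb
    set F : H × S → ℝ := fun y => ∫ z, φ z ∂(P s t y) with hFdef
    have hFsm : StronglyMeasurable F := by
      have hu : StronglyMeasurable (Function.uncurry fun (_ : H × S) z => φ z) :=
        (hφm.comp measurable_snd).stronglyMeasurable
      exact hu.integral_kernel_prod_right (κ := P s t)
    have hFb : ∀ y, |F y| ≤ C := fun y => abs_integral_le_bound hCb
    have hFint : Integrable F (P r s x) :=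
      Integrable.mono' (integrable_const C) hFsm.aestronglyMeasurable
        (Filter.Eventually.of_forall fun y => by simpa [Real.norm_eq_abs] using hFb y)
    -- pointwise bound
    have hpt : ∀ y, |(∫ z, φ z ∂(P s t x)) - F y|
        ≤ η + Set.indicator Aᶜ (fun _ => (2 : ℝ)) y := by
      intro y
      by_cases hy : y ∈ A
      · have hyB : y.1 ∈ B := by
          simp only [hBdef, Metric.mem_closedBall, dist_zero_right]
          exact le_trans hy (le_max_left _ _)
        have hd : dLstar (P s t x) (P s t y) ≤ η := hTc t ht x y hxB hyB
        have hle : |(∫ z, φ z ∂(P s t x)) - F y| ≤ dLstar (P s t x) (P s t y) :=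
          abs_sub_integral_le_dLstar hφAdm'
        rw [Set.indicator_of_notMem (by simpa using hy)]
        linarith [hle.trans hd]
      · rw [Set.indicator_of_mem (by simpa using hy)]
        have hb1 : |∫ z, φ z ∂(P s t x)| ≤ C := abs_integral_le_bound hCb
        have hb2 : |F y| ≤ C := hFb y
        calc |(∫ z, φ z ∂(P s t x)) - F y| ≤ |∫ z, φ z ∂(P s t x)| + |F y| := abs_sub _ _
          _ ≤ η + 2 := by linarith
    -- integral estimate
    have hmAc : ((P r s x) Aᶜ).toReal ≤ η := by
      have hball := hRball r s hrs
      have h1 : (1 : ℝ≥0∞) ≤ P r s x A + ENNReal.ofReal η := by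
        calc (1 : ℝ≥0∞) ≤ (1 - ENNReal.ofReal η) + ENNReal.ofReal η := le_tsub_add
          _ ≤ P r s x A + ENNReal.ofReal η := add_le_add_left hball.le _
      have hcomp : (P r s x) Aᶜ ≤ ENNReal.ofReal η := by
        rw [prob_compl_eq_one_sub hAm]
        exact tsub_le_iff_left.mpr h1
      exact ENNReal.toReal_le_of_le_ofReal hη.le hcomp
    have hbint : Integrable (fun y => η + Set.indicator Aᶜ (fun _ => (2 : ℝ)) y) (P r s x) :=
      (integrable_const η).add ((integrable_const (2 : ℝ)).indicator hAm.compl)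
    have hgint : Integrable (fun y => (∫ z, φ z ∂(P s t x)) - F y) (P r s x) :=
      (integrable_const _).sub hFint
    have hsplit : (∫ z, φ z ∂(P s t x)) - ∫ y, F y ∂(P r s x)
        = ∫ y, ((∫ z, φ z ∂(P s t x)) - F y) ∂(P r s x) := by
      rw [integral_sub (integrable_const _) hFint, integral_const]
      simp
    calc |(∫ z, φ z ∂(P s t x)) - ∫ z, φ z ∂(P r t x)|
        = |∫ y, ((∫ z, φ z ∂(P s t x)) - F y) ∂(P r s x)| := by rw [key, hsplit]
      _ ≤ ∫ y, |(∫ z, φ z ∂(P s t x)) - F y| ∂(P r s x) := by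
          simpa [Real.norm_eq_abs] using
            norm_integral_le_integral_norm (μ := P r s x)
              (fun y => (∫ z, φ z ∂(P s t x)) - F y)
      _ ≤ ∫ y, (η + Set.indicator Aᶜ (fun _ => (2 : ℝ)) y) ∂(P r s x) :=
          integral_mono hgint.abs hbint hpt
      _ = η + ((P r s x) Aᶜ).toReal • (2 : ℝ) := by
          rw [integral_add (integrable_const η)
            ((integrable_const (2 : ℝ)).indicator hAm.compl), integral_const,
            integral_indicator_const (2 : ℝ) hAm.compl]
          simp
          rfl
      _ ≤ η + 2 * η := by
          rw [smul_eq_mul]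
          nlinarith [hmAc]
  -- pass to the limit r → -∞
  have hfinal : dLstar (P s t x) (μ t) ≤ η + 2 * η := by
    have htend : Tendsto (fun r : ℝ => (η + 2 * η) + dLstar (P r t x) (μ t)) atBot
        (nhds ((η + 2 * η) + 0)) := tendsto_const_nhds.add (hPullback t x)
    have hev : ∀ᶠ r in atBot,
        dLstar (P s t x) (μ t) ≤ (η + 2 * η) + dLstar (P r t x) (μ t) := by
      filter_upwards [eventually_le_atBot s] with r hrs
      haveI h2 := hMarkov r t (hrs.trans hst)
      calc dLstar (P s t x) (μ t)
          ≤ dLstar (P s t x) (P r t x) + dLstar (P r t x) (μ t) :=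
            dLstar_triangle _ _ _
        _ ≤ (η + 2 * η) + dLstar (P r t x) (μ t) := add_le_add_left (hclaim r hrs) _
    have := ge_of_tendsto htend hev
    simpa using this
  rw [Real.dist_eq, sub_zero, abs_of_nonneg (dLstar_nonneg _ _)]
  have : η + 2 * η = 3 * (ε / 4) := by rw [hηdef]; ring
  linarith [hfinal]
end

section
/- Let H be a separable Banach space, S a nonempty finite set, and X = H × S. Let (P_{s,t})_{s ≤ t} be a two-parameter family of Markov kernels on X satisfying the Chapman–Kolmogorov relation. Assume: (i) for every x ∈ X and η > 0 there exists R > 0 such that P_{s,t}(x)({(u,j) ∈ X : ‖u‖ ≤ R}) > 1 − η for all s ≤ t; (ii) for every s ∈ ℝ, every bounded set B ⊆ H and every η > 0 there exists T > 0 such that d_L^*(P_{s,t}(x₁), P_{s,t}(x₂)) ≤ η for all t ≥ s + T and all x₁, x₂ ∈ B × S. Then for all s* ≤ s in ℝ, every x ∈ X and every η > 0 there exists T > 0 such that d_L^*(P_{s,t}(x), P_{s*,t}(x)) < η for all t ≥ s + T. -/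
open MeasureTheory ProbabilityTheory Filter Topology

section helpers

variable {H S : Type*} [NormedAddCommGroup H] [DecidableEq S]
  [MeasurableSpace H] [MeasurableSpace S]

omit [NormedAddCommGroup H] [DecidableEq S] in
lemma abs_integral_le_of_prob (μ : Measure (H × S)) [IsProbabilityMeasure μ]
    {φ : H × S → ℝ} {C : ℝ} (hφC : ∀ x, |φ x| ≤ C) :
    |∫ x, φ x ∂μ| ≤ C := by
  have := norm_integral_le_of_norm_le_const (μ := μ) (f := φ) (C := C)
    (Filter.Eventually.of_forall fun x => by simpa using hφC x)
  simpa [measure_univ] using this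

lemma dLstar_set_le_two (μ ν : Measure (H × S)) [IsProbabilityMeasure μ]
    [IsProbabilityMeasure ν] :
    ∀ r ∈ { r : ℝ | ∃ φ : H × S → ℝ,
      (∃ C K : ℝ, 0 ≤ C ∧ 0 ≤ K ∧ C + K ≤ 1 ∧ (∀ x, |φ x| ≤ C) ∧
        ∀ x y, |φ x - φ y| ≤ K * distX x y) ∧
      r = |(∫ x, φ x ∂μ) - ∫ x, φ x ∂ν| }, r ≤ 2 := by
  rintro r ⟨φ, ⟨C, K, hC0, hK0, hCK1, hφC, -⟩, rfl⟩
  have h1 := abs_integral_le_of_prob μ hφC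
  have h2 := abs_integral_le_of_prob ν hφC
  have hC1 : C ≤ 1 := by linarith
  calc |(∫ x, φ x ∂μ) - ∫ x, φ x ∂ν| ≤ |∫ x, φ x ∂μ| + |∫ x, φ x ∂ν| := abs_sub _ _
    _ ≤ 2 := by linarith

lemma abs_integral_sub_le_dLstar (μ ν : Measure (H × S)) [IsProbabilityMeasure μ]
    [IsProbabilityMeasure ν] {φ : H × S → ℝ} {C K : ℝ}
    (hC0 : 0 ≤ C) (hK0 : 0 ≤ K) (hCK1 : C + K ≤ 1) (hφC : ∀ x, |φ x| ≤ C)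
    (hLip : ∀ x y, |φ x - φ y| ≤ K * distX x y) :
    |(∫ x, φ x ∂μ) - ∫ x, φ x ∂ν| ≤ dLstar μ ν :=
  le_csSup ⟨2, fun r hr => dLstar_set_le_two μ ν r hr⟩
    ⟨φ, ⟨C, K, hC0, hK0, hCK1, hφC, hLip⟩, rfl⟩

lemma dLstar_le (μ ν : Measure (H × S)) {b : ℝ} (hb : 0 ≤ b)
    (h : ∀ (φ : H × S → ℝ) (C K : ℝ), 0 ≤ C → 0 ≤ K → C + K ≤ 1 →
      (∀ x, |φ x| ≤ C) → (∀ x y, |φ x - φ y| ≤ K * distX x y) →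
      |(∫ x, φ x ∂μ) - ∫ x, φ x ∂ν| ≤ b) :
    dLstar μ ν ≤ b := by
  apply Real.sSup_le _ hb
  rintro r ⟨φ, ⟨C, K, hC0, hK0, hCK1, hφC, hLip⟩, rfl⟩
  exact h φ C K hC0 hK0 hCK1 hφC hLip

lemma lip_measurable [BorelSpace H] [MeasurableSingletonClass S] [Countable S]
    {φ : H × S → ℝ} {K : ℝ} (hK0 : 0 ≤ K)
    (hLip : ∀ x y, |φ x - φ y| ≤ K * distX x y) : Measurable φ := by
  apply measurable_from_prod_countable_left
  intro j
  have hlip : LipschitzWith K.toNNReal (fun u : H => φ (u, j)) := by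
    apply LipschitzWith.of_dist_le_mul
    intro u v
    have h := hLip (u, j) (v, j)
    simp [distX] at h
    rw [Real.dist_eq, dist_eq_norm, Real.coe_toNNReal K hK0]
    exact h
  exact hlip.continuous.measurable

end helpers

lemma integral_kernel_comp {α β γ : Type*} [MeasurableSpace α] [MeasurableSpace β]
    [MeasurableSpace γ] (η : Kernel β γ) [IsMarkovKernel η] (κ : Kernel α β)
    [IsMarkovKernel κ] (a : α) {f : γ → ℝ} (hf : Measurable f) {C : ℝ}
    (hC : ∀ z, |f z| ≤ C) :
    ∫ z, f z ∂((η ∘ₖ κ) a) = ∫ b, ∫ z, f z ∂(η b) ∂(κ a) := by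
  rw [Kernel.comp_eq_snd_compProd, Kernel.snd_apply,
    integral_map measurable_snd.aemeasurable hf.aestronglyMeasurable,
    ProbabilityTheory.integral_compProd]
  · simp [Kernel.prodMkLeft_apply]
  · refine Integrable.mono' (integrable_const C)
      ((hf.comp measurable_snd).aestronglyMeasurable) ?_
    exact Filter.Eventually.of_forall fun z => by simpa using hC z.2

/-- for all s* ≤ s, x and η > 0 there is T > 0 with
d_L^*(P_{s,t}(x), P_{s*,t}(x)) < η for all t ≥ s + T. -/
theorem stmt_4
    {H S : Type*}
    [NormedAddCommGroup H] [NormedSpace ℝ H] [CompleteSpace H]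
    [SecondCountableTopology H] [MeasurableSpace H] [BorelSpace H]
    [Fintype S] [Nonempty S] [DecidableEq S]
    [MeasurableSpace S] [MeasurableSingletonClass S]
    (P : ℝ → ℝ → Kernel (H × S) (H × S))
    (hMarkov : ∀ s t : ℝ, s ≤ t → IsMarkovKernel (P s t))
    (hCK : ∀ s r t : ℝ, s ≤ r → r ≤ t → ∀ x : H × S, ∀ A : Set (H × S),
      MeasurableSet A → P s t x A = ∫⁻ y, P r t y A ∂(P s r x))
    (hBound : ∀ x : H × S, ∀ η : ℝ, 0 < η → ∃ R : ℝ, 0 < R ∧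
      ∀ s t : ℝ, s ≤ t →
        P s t x {y : H × S | ‖y.1‖ ≤ R} > 1 - ENNReal.ofReal η)
    (hContr : ∀ s : ℝ, ∀ B : Set H, Bornology.IsBounded B → ∀ η : ℝ, 0 < η →
      ∃ T : ℝ, 0 < T ∧ ∀ t : ℝ, s + T ≤ t → ∀ x₁ x₂ : H × S,
        x₁.1 ∈ B → x₂.1 ∈ B → dLstar (P s t x₁) (P s t x₂) ≤ η) :
    ∀ sStar s : ℝ, sStar ≤ s → ∀ x : H × S, ∀ η : ℝ, 0 < η →
      ∃ T : ℝ, 0 < T ∧ ∀ t : ℝ, s + T ≤ t →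
        dLstar (P s t x) (P sStar t x) < η := by
  intro sStar s hss x η hη
  obtain ⟨R, hR, hRb⟩ := hBound x (η/4) (by positivity)
  obtain ⟨T, hT, hTc⟩ := hContr s (Metric.closedBall (0:H) (max R ‖x.1‖))
    Metric.isBounded_closedBall (η/4) (by positivity)
  refine ⟨T, hT, fun t ht => ?_⟩
  have hst : s ≤ t := by linarith
  have hs't : sStar ≤ t := hss.trans hst
  haveI h1 := hMarkov sStar s hss
  haveI h2 := hMarkov s t hst
  haveI h3 := hMarkov sStar t hs't
  have hkey : P sStar t x = ((P s t) ∘ₖ (P sStar s)) x := by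
    ext A hA
    rw [hCK sStar s t hss hst x A hA, Kernel.comp_apply' _ _ _ hA]
  set μ := P sStar s x with hμdef
  have hAm : MeasurableSet {y : H × S | ‖y.1‖ ≤ R} :=
    measurable_fst.norm measurableSet_Iic
  have hcompl : (μ {y : H × S | ‖y.1‖ ≤ R}ᶜ).toReal ≤ η/4 := by
    have h0 := hRb sStar s hss
    have h1 : (1 : ENNReal) ≤ ENNReal.ofReal (η/4) + μ {y : H × S | ‖y.1‖ ≤ R} :=
      tsub_le_iff_left.mp h0.le
    have h2 : μ {y : H × S | ‖y.1‖ ≤ R}ᶜ ≤ ENNReal.ofReal (η/4) := by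
      rw [prob_compl_eq_one_sub hAm]
      exact tsub_le_iff_right.mpr h1
    exact ENNReal.toReal_le_of_le_ofReal (by positivity) h2
  have hmain : dLstar (P s t x) (P sStar t x) ≤ 3*(η/4) := by
    apply dLstar_le _ _ (by positivity)
    intro φ C K hC0 hK0 hCK1 hφC hLip
    have hφm : Measurable φ := lip_measurable hK0 hLip
    set g : H × S → ℝ := fun y => ∫ z, φ z ∂(P s t y) with hgdef
    have hgm : Measurable g :=
      (MeasureTheory.StronglyMeasurable.integral_kernel_prod_right'
        (κ := P s t) ((hφm.comp measurable_snd).stronglyMeasurable)).measurable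
    have hgC : ∀ y, |g y| ≤ C := fun y => abs_integral_le_of_prob _ hφC
    have hgint : Integrable g μ :=
      Integrable.mono' (integrable_const C) hgm.aestronglyMeasurable
        (Filter.Eventually.of_forall fun y => by simpa using hgC y)
    set c : ℝ := ∫ z, φ z ∂(P s t x) with hcdef
    have hcC : |c| ≤ C := abs_integral_le_of_prob _ hφC
    have hrw : ∫ z, φ z ∂(P sStar t x) = ∫ y, g y ∂μ := by
      rw [hkey]
      exact integral_kernel_comp (P s t) (P sStar s) x hφm hφC
    have hdiff : (∫ z, φ z ∂(P s t x)) - ∫ z, φ z ∂(P sStar t x)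
        = ∫ y, (c - g y) ∂μ := by
      rw [hrw, integral_sub (integrable_const c) hgint]
      congr 1
      simp [integral_const, measure_univ]
      exact hcdef.symm
    have habs_int : Integrable (fun y => |c - g y|) μ :=
      ((integrable_const c).sub hgint).abs
    have hA1 : ∫ y in {y : H × S | ‖y.1‖ ≤ R}, |c - g y| ∂μ ≤ η/4 := by
      have hb : ∀ y ∈ {y : H × S | ‖y.1‖ ≤ R}, |c - g y| ≤ η/4 := by
        intro y hy
        have hx1 : x.1 ∈ Metric.closedBall (0:H) (max R ‖x.1‖) := by
          simp only [Metric.mem_closedBall, dist_zero_right]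
          exact le_max_right _ _
        have hy1 : y.1 ∈ Metric.closedBall (0:H) (max R ‖x.1‖) := by
          simp only [Metric.mem_closedBall, dist_zero_right]
          exact le_trans hy (le_max_left _ _)
        have hd := hTc t ht x y hx1 hy1
        exact le_trans
          (abs_integral_sub_le_dLstar (P s t x) (P s t y) hC0 hK0 hCK1 hφC hLip) hd
      have hμA1 : (μ {y : H × S | ‖y.1‖ ≤ R}).toReal ≤ 1 :=
        ENNReal.toReal_mono (by simp) prob_le_one
      calc ∫ y in {y : H × S | ‖y.1‖ ≤ R}, |c - g y| ∂μ
          ≤ ∫ _ in {y : H × S | ‖y.1‖ ≤ R}, (η/4) ∂μ :=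
            setIntegral_mono_on habs_int.integrableOn
              ((integrableOn_const_iff).mpr (Or.inr (measure_lt_top μ _))) hAm hb
        _ = (μ {y : H × S | ‖y.1‖ ≤ R}).toReal • (η/4) := setIntegral_const _
        _ ≤ η/4 := by
            rw [smul_eq_mul]
            nlinarith [ENNReal.toReal_nonneg (a := μ {y : H × S | ‖y.1‖ ≤ R})]
    have hA2 : ∫ y in {y : H × S | ‖y.1‖ ≤ R}ᶜ, |c - g y| ∂μ ≤ 2*(η/4) := by
      have hC1 : C ≤ 1 := by linarith
      have hb : ∀ y ∈ {y : H × S | ‖y.1‖ ≤ R}ᶜ, |c - g y| ≤ 2 := by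
        intro y _
        calc |c - g y| ≤ |c| + |g y| := abs_sub _ _
          _ ≤ 2 := by have := hgC y; linarith
      calc ∫ y in {y : H × S | ‖y.1‖ ≤ R}ᶜ, |c - g y| ∂μ
          ≤ ∫ _ in {y : H × S | ‖y.1‖ ≤ R}ᶜ, (2:ℝ) ∂μ :=
            setIntegral_mono_on habs_int.integrableOn
              ((integrableOn_const_iff).mpr (Or.inr (measure_lt_top μ _))) hAm.compl hb
        _ = (μ {y : H × S | ‖y.1‖ ≤ R}ᶜ).toReal • 2 := setIntegral_const _
        _ ≤ 2*(η/4) := by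
            rw [smul_eq_mul]
            nlinarith [ENNReal.toReal_nonneg (a := μ {y : H × S | ‖y.1‖ ≤ R}ᶜ)]
    calc |(∫ z, φ z ∂(P s t x)) - ∫ z, φ z ∂(P sStar t x)|
        = |∫ y, (c - g y) ∂μ| := by rw [hdiff]
      _ ≤ ∫ y, |c - g y| ∂μ := by
          simpa [Real.norm_eq_abs] using norm_integral_le_integral_norm (μ := μ) (fun y => c - g y)
      _ = (∫ y in {y : H × S | ‖y.1‖ ≤ R}, |c - g y| ∂μ)
          + ∫ y in {y : H × S | ‖y.1‖ ≤ R}ᶜ, |c - g y| ∂μ :=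
            (integral_add_compl hAm habs_int).symm
      _ ≤ η/4 + 2*(η/4) := add_le_add hA1 hA2
      _ = 3*(η/4) := by ring
  calc dLstar (P s t x) (P sStar t x) ≤ 3*(η/4) := hmain
    _ < η := by linarith
end
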